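/- With u as in the explicit square-well landscape function (M > ε > 0, δ > 0), the maximum of u on ℝ is attained at the origin, and inf_ℝ (1/u - M) = (1/u(0)) - M = -ε + ε (M-ε)/M · 1/(cosh(√(M-ε)δ) + (√(M-ε)/√M) sinh(√(M-ε)δ)) + o(ε) as ε → 0^+ (δ, M fixed with M > ε). -/
import Mathlib

open Real Filter Asymptotics

/-- The explicit landscape function for the one-dimensional square well
`V = -ε 1_{(-δ,δ)}` with shift `M > ε`. -/
noncomputable def sqWell (M ε δ : ℝ) (x : ℝ) : ℝ :=
  if |x| ≤ δ then
    1 / (M - ε) +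
      ((1 / M - 1 / (M - ε)) /
          (Real.cosh (Real.sqrt (M - ε) * δ) +
            Real.sqrt (M - ε) / Real.sqrt M * Real.sinh (Real.sqrt (M - ε) * δ))) *
        Real.cosh (Real.sqrt (M - ε) * x)
  else
    1 / M +
      (-(Real.sqrt (M - ε) / Real.sqrt M) * Real.sinh (Real.sqrt (M - ε) * δ) *
          Real.exp (Real.sqrt M * δ) *
          ((1 / M - 1 / (M - ε)) /
            (Real.cosh (Real.sqrt (M - ε) * δ) +
              Real.sqrt (M - ε) / Real.sqrt M * Real.sinh (Real.sqrt (M - ε) * δ)))) *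
        Real.exp (-(Real.sqrt M * |x|))

section aux

variable {M ε δ : ℝ}

/-- Basic quantities. -/
lemma sqWell_D_pos (hM : 0 < M) (hε : 0 < ε) (hεM : ε < M) (hδ : 0 < δ) :
    0 < Real.cosh (Real.sqrt (M - ε) * δ) +
      Real.sqrt (M - ε) / Real.sqrt M * Real.sinh (Real.sqrt (M - ε) * δ) := by
  have h1 : 0 < M - ε := by linarith
  have hs : 0 < Real.sqrt (M - ε) := Real.sqrt_pos.mpr h1
  have hsM : 0 < Real.sqrt M := Real.sqrt_pos.mpr hM
  have := Real.one_le_cosh (Real.sqrt (M - ε) * δ)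
  have hsh : 0 < Real.sinh (Real.sqrt (M - ε) * δ) :=
    Real.sinh_pos_iff.mpr (by positivity)
  positivity

lemma sqWell_A_neg (hM : 0 < M) (hε : 0 < ε) (hεM : ε < M) (hδ : 0 < δ) :
    (1 / M - 1 / (M - ε)) /
      (Real.cosh (Real.sqrt (M - ε) * δ) +
        Real.sqrt (M - ε) / Real.sqrt M * Real.sinh (Real.sqrt (M - ε) * δ)) < 0 := by
  have h1 : 0 < M - ε := by linarith
  apply div_neg_of_neg_of_pos _ (sqWell_D_pos hM hε hεM hδ)
  have : 1 / M < 1 / (M - ε) := one_div_lt_one_div_of_lt h1 (by linarith)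
  linarith

lemma sqWell_zero (hδ : 0 < δ) :
    sqWell M ε δ 0 = 1 / (M - ε) +
      (1 / M - 1 / (M - ε)) /
        (Real.cosh (Real.sqrt (M - ε) * δ) +
          Real.sqrt (M - ε) / Real.sqrt M * Real.sinh (Real.sqrt (M - ε) * δ)) := by
  simp [sqWell, abs_zero, hδ.le]

/-- The matching identity and bounds: positivity and maximality at 0. -/
lemma sqWell_bounds (hM : 0 < M) (hε : 0 < ε) (hεM : ε < M) (hδ : 0 < δ) (x : ℝ) :
    1 / M < sqWell M ε δ x ∧ sqWell M ε δ x ≤ sqWell M ε δ 0 := by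
  have h1 : 0 < M - ε := by linarith
  have hs : 0 < Real.sqrt (M - ε) := Real.sqrt_pos.mpr h1
  have hsM : 0 < Real.sqrt M := Real.sqrt_pos.mpr hM
  have hval_in : ∀ y : ℝ, |y| ≤ δ → sqWell M ε δ y = 1 / (M - ε) +
      ((1 / M - 1 / (M - ε)) /
          (Real.cosh (Real.sqrt (M - ε) * δ) +
            Real.sqrt (M - ε) / Real.sqrt M * Real.sinh (Real.sqrt (M - ε) * δ))) *
        Real.cosh (Real.sqrt (M - ε) * y) := by
    intro y hy; unfold sqWell; rw [if_pos hy]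
  have hval_out : ∀ y : ℝ, ¬ |y| ≤ δ → sqWell M ε δ y = 1 / M +
      (-(Real.sqrt (M - ε) / Real.sqrt M) * Real.sinh (Real.sqrt (M - ε) * δ) *
          Real.exp (Real.sqrt M * δ) *
          ((1 / M - 1 / (M - ε)) /
            (Real.cosh (Real.sqrt (M - ε) * δ) +
              Real.sqrt (M - ε) / Real.sqrt M * Real.sinh (Real.sqrt (M - ε) * δ)))) *
        Real.exp (-(Real.sqrt M * |y|)) := by
    intro y hy; unfold sqWell; rw [if_neg hy]
  set s := Real.sqrt (M - ε) with hs_def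
  set c := Real.cosh (s * δ) with hc_def
  set sh := Real.sinh (s * δ) with hsh_def
  set D := c + s / Real.sqrt M * sh with hD_def
  set A := (1 / M - 1 / (M - ε)) / D with hA_def
  have hD : 0 < D := sqWell_D_pos hM hε hεM hδ
  have hA : A < 0 := sqWell_A_neg hM hε hεM hδ
  have hc1 : 1 ≤ c := Real.one_le_cosh _
  have hsh : 0 < sh := Real.sinh_pos_iff.mpr (by positivity)
  have hu0 : sqWell M ε δ 0 = 1 / (M - ε) + A := sqWell_zero hδ
  -- matching identity
  have hmatch : 1 / M + -(s / Real.sqrt M) * sh * A = 1 / (M - ε) + A * c := by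
    have hAD : A * D = 1 / M - 1 / (M - ε) := div_mul_cancel₀ _ hD.ne'
    rw [hD_def] at hAD
    nlinarith [hAD]
  -- value at the matching point dominates 1/M
  have hmatch_pos : 1 / M < 1 / (M - ε) + A * c := by
    rw [← hmatch]
    nlinarith [mul_pos (div_pos hs hsM) hsh]
  by_cases hx : |x| ≤ δ
  · rw [hval_in x hx, hu0]
    constructor
    · have hcosh : Real.cosh (s * x) ≤ c := by
        rw [hc_def, Real.cosh_le_cosh, abs_mul, abs_mul, abs_of_pos hs, abs_of_pos hδ]
        exact mul_le_mul_of_nonneg_left hx hs.le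
      have h2 : A * c ≤ A * Real.cosh (s * x) :=
        mul_le_mul_of_nonpos_left hcosh hA.le
      calc 1 / M < 1 / (M - ε) + A * c := hmatch_pos
        _ ≤ 1 / (M - ε) + A * Real.cosh (s * x) := by linarith
    · have h2 : A * Real.cosh (s * x) ≤ A * 1 :=
        mul_le_mul_of_nonpos_left (Real.one_le_cosh _) hA.le
      linarith
  · rw [hval_out x hx, hu0]
    push_neg at hx
    set B := -(s / Real.sqrt M) * sh * Real.exp (Real.sqrt M * δ) * A with hB_def
    have hB : 0 < B := by
      have h2 : 0 < s / Real.sqrt M * sh * Real.exp (Real.sqrt M * δ) := by positivity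
      nlinarith
    have hexp : Real.exp (-(Real.sqrt M * |x|)) ≤ Real.exp (-(Real.sqrt M * δ)) := by
      apply Real.exp_le_exp.mpr
      have : Real.sqrt M * δ ≤ Real.sqrt M * |x| :=
        mul_le_mul_of_nonneg_left hx.le hsM.le
      linarith
    have hBval : B * Real.exp (-(Real.sqrt M * δ)) = -(s / Real.sqrt M) * sh * A := by
      rw [hB_def,
        show -(s / Real.sqrt M) * sh * Real.exp (Real.sqrt M * δ) * A *
            Real.exp (-(Real.sqrt M * δ)) =
          -(s / Real.sqrt M) * sh * A *
            (Real.exp (Real.sqrt M * δ) * Real.exp (-(Real.sqrt M * δ))) by ring,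
        ← Real.exp_add]
      simp
    constructor
    · have : 0 < B * Real.exp (-(Real.sqrt M * |x|)) := by positivity
      linarith
    · have h3 : B * Real.exp (-(Real.sqrt M * |x|)) ≤ B * Real.exp (-(Real.sqrt M * δ)) :=
        mul_le_mul_of_nonneg_left hexp hB.le
      have h4 : 1 / M + B * Real.exp (-(Real.sqrt M * δ)) = 1 / (M - ε) + A * c := by
        rw [hBval]; exact hmatch
      have h5 : A * c ≤ A * 1 := mul_le_mul_of_nonpos_left hc1 hA.le
      linarith

end aux

/-- For the explicit square-well landscape function `u = sqWell M ε δ`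
(`M > ε > 0`, `δ > 0`), the maximum of `u` on `ℝ` is attained at the origin, and
`inf_ℝ (1/u - M) = 1/u(0) - M
  = -ε + ε (M-ε)/M · 1/(cosh(√(M-ε)δ) + (√(M-ε)/√M) sinh(√(M-ε)δ)) + o(ε)`
as `ε → 0⁺` (`δ, M` fixed). -/
theorem statement9 (M δ : ℝ) (hδ : 0 < δ) (hM : 0 < M) :
    (∀ ε : ℝ, 0 < ε → ε < M → ∀ x : ℝ, sqWell M ε δ x ≤ sqWell M ε δ 0) ∧
    (∀ ε : ℝ, 0 < ε → ε < M →
      ⨅ x : ℝ, (1 / sqWell M ε δ x - M) = 1 / sqWell M ε δ 0 - M) ∧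
    (fun ε => (1 / sqWell M ε δ 0 - M) -
        (-ε + ε * (M - ε) / M *
          (1 / (Real.cosh (Real.sqrt (M - ε) * δ) +
            Real.sqrt (M - ε) / Real.sqrt M * Real.sinh (Real.sqrt (M - ε) * δ)))))
      =o[nhdsWithin 0 (Set.Ioi 0)] (fun ε => ε) := by
  refine ⟨fun ε hε hεM x => (sqWell_bounds hM hε hεM hδ x).2, fun ε hε hεM => ?_, ?_⟩
  · -- infimum attained at 0
    have hkey : ∀ x : ℝ, 1 / sqWell M ε δ 0 - M ≤ 1 / sqWell M ε δ x - M := by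
      intro x
      have h := sqWell_bounds hM hε hεM hδ x
      have hpos : 0 < sqWell M ε δ x := lt_trans (one_div_pos.mpr hM) h.1
      have := one_div_le_one_div_of_le hpos h.2
      linarith
    refine le_antisymm (ciInf_le ⟨1 / sqWell M ε δ 0 - M, ?_⟩ 0) (le_ciInf hkey)
    rintro y ⟨x, rfl⟩
    exact hkey x
  · -- little-o expansion
    set D : ℝ → ℝ := fun ε => Real.cosh (Real.sqrt (M - ε) * δ) +
        Real.sqrt (M - ε) / Real.sqrt M * Real.sinh (Real.sqrt (M - ε) * δ) with hD_def
    have hsM : 0 < Real.sqrt M := Real.sqrt_pos.mpr hM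
    have hD0 : D 0 = Real.exp (Real.sqrt M * δ) := by
      simp only [hD_def, sub_zero, div_self hsM.ne']
      rw [one_mul, Real.cosh_eq, Real.sinh_eq]
      ring
    have hD0pos : 0 < D 0 := by rw [hD0]; positivity
    set φ : ℝ → ℝ := fun ε =>
        M * (1 - D ε) / (M * D ε - ε) + 1 - (M - ε) / (M * D ε) with hφ_def
    have hDcont : ContinuousAt D 0 := by
      have hsq : Continuous fun ε : ℝ => Real.sqrt (M - ε) :=
        Real.continuous_sqrt.comp (continuous_const.sub continuous_id)
      exact ((Real.continuous_cosh.comp (hsq.mul continuous_const)).continuousAt).add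
        ((hsq.continuousAt.div continuousAt_const hsM.ne').mul
          ((Real.continuous_sinh.comp (hsq.mul continuous_const)).continuousAt))
    have hMD : ContinuousAt (fun ε : ℝ => M * D ε) 0 := continuousAt_const.mul hDcont
    have hMDne : M * D 0 ≠ 0 := (mul_pos hM hD0pos).ne'
    have hφcont : ContinuousAt φ 0 := by
      apply ContinuousAt.sub
      · apply ContinuousAt.add _ continuousAt_const
        apply ContinuousAt.div (continuousAt_const.mul (continuousAt_const.sub hDcont))
          (hMD.sub continuousAt_id)
        show M * D 0 - 0 ≠ 0
        rw [sub_zero]; exact hMDne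
      · exact ContinuousAt.div (continuousAt_const.sub continuousAt_id) hMD hMDne
    have hφ0 : φ 0 = 0 := by
      have h1 : D 0 ≠ 0 := hD0pos.ne'
      have h2 : M ≠ 0 := hM.ne'
      simp only [hφ_def]
      rw [sub_zero, sub_zero]
      field_simp
      ring
    have htend : Tendsto φ (nhdsWithin 0 (Set.Ioi 0)) (nhds 0) := by
      have := hφcont.tendsto.mono_left (nhdsWithin_le_nhds (s := Set.Ioi 0))
      rwa [hφ0] at this
    rw [Asymptotics.isLittleO_iff_tendsto'
      (by filter_upwards [self_mem_nhdsWithin] with x hx h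
          exact absurd h (ne_of_gt hx))]
    apply htend.congr'
    filter_upwards [Ioo_mem_nhdsGT_of_mem (Set.mem_Ico.mpr ⟨le_refl 0, hM⟩)] with ε hεm
    obtain ⟨hε0, hεM⟩ := hεm
    have h1 : 0 < M - ε := by linarith
    have hDε : Real.cosh (Real.sqrt (M - ε) * δ) +
        Real.sqrt (M - ε) / Real.sqrt M * Real.sinh (Real.sqrt (M - ε) * δ) = D ε := rfl
    have hD : 0 < D ε := sqWell_D_pos hM hε0 hεM hδ
    have hDM : 0 < M * D ε - ε := by
      have hD1 : 1 ≤ D ε := by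
        have hsh : 0 ≤ Real.sinh (Real.sqrt (M - ε) * δ) :=
          Real.sinh_nonneg_iff.mpr (by positivity)
        have h2 := Real.one_le_cosh (Real.sqrt (M - ε) * δ)
        have h3 : 0 ≤ Real.sqrt (M - ε) / Real.sqrt M *
            Real.sinh (Real.sqrt (M - ε) * δ) := by positivity
        simp only [hD_def]
        linarith
      nlinarith
    have hu0 : sqWell M ε δ 0 = (M * D ε - ε) / (M * (M - ε) * D ε) := by
      rw [sqWell_zero hδ, hDε]
      field_simp
      ring
    have hu0inv : 1 / sqWell M ε δ 0 = M * (M - ε) * D ε / (M * D ε - ε) := by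
      rw [hu0, one_div_div]
    simp only [hφ_def]
    rw [hu0inv, hDε]
    field_simp
    ring
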